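/- Let A be a residuated lattice, F a filter of A, and n ≥ 1. The following are equivalent: (1) for any n + 1 pairwise distinct F-minimal prime filters m₀, …, mₙ, the join m₀ ∨ ⋯ ∨ mₙ in the lattice of filters equals A; (2) A is n-normal with respect to F; (3) for every prime filter P containing F, D_F(P) is an (n+1)-prime filter; (4) for any x₀, …, xₙ ∈ A with xᵢ ∨ xⱼ ∈ F for all i ≠ j, the join (F : x₀) ∨ ⋯ ∨ (F : xₙ) in the lattice of filters equals A; (5) for any x₀, …, xₙ ∈ A with xᵢ ∨ xⱼ ∈ F for all i ≠ j, there exist aᵢ ∈ (F : xᵢ) for each i with a₀ ⊙ ⋯ ⊙ aₙ = 0; (6) for any x₀, …, xₙ ∈ A, (F : x₀ ∨ ⋯ ∨ xₙ) = ⋁_{i=0}^{n} (F : ⋁_{j ≠ i} xⱼ) (join in the lattice of filters); (7) for any x₀, …, xₙ ∈ A, x₀ ∨ ⋯ ∨ xₙ ∈ F implies ⋁_{i=0}^{n} (F : ⋁_{j ≠ i} xⱼ) = A. -/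

import Mathlib

class ResiduatedLattice (α : Type*) extends Lattice α, CommMonoid α, BoundedOrder α where
  rimp : α → α → α
  one_eq_top : (1 : α) = ⊤
  adjunction : ∀ x y z : α, x * y ≤ z ↔ x ≤ rimp y z

variable {α : Type*} [ResiduatedLattice α]

/-- A filter of a residuated lattice: nonempty, closed under `⊙` and upward closed. -/
def IsFilter (F : Set α) : Prop :=
  F.Nonempty ∧ (∀ x ∈ F, ∀ y ∈ F, x * y ∈ F) ∧ ∀ x ∈ F, ∀ y : α, x ≤ y → y ∈ F

/-- A prime filter: a proper filter such that `x ⊔ y ∈ P` implies `x ∈ P` or `y ∈ P`. -/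
def IsPrimeFilter (P : Set α) : Prop :=
  IsFilter P ∧ P ≠ Set.univ ∧ ∀ x y : α, x ⊔ y ∈ P → x ∈ P ∨ y ∈ P

/-- A `∨`-closed subset: nonempty and closed under join. -/
def IsJoinClosed (C : Set α) : Prop :=
  C.Nonempty ∧ ∀ x ∈ C, ∀ y ∈ C, x ⊔ y ∈ C

/-- The filter generated by a set. -/
def filterGen (X : Set α) : Set α := ⋂₀ {G : Set α | IsFilter G ∧ X ⊆ G}

/-- An `X`-minimal prime filter: prime, contains `X`, minimal among primes containing `X`. -/
def IsMinPrimeOver (X P : Set α) : Prop :=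
  IsPrimeFilter P ∧ X ⊆ P ∧ ∀ Q : Set α, IsPrimeFilter Q → X ⊆ Q → Q ⊆ P → Q = P

/-- `ω_F(X) = {a | x ∨ a ∈ F for some x ∈ X}`. -/
def omegaF (F X : Set α) : Set α := {a : α | ∃ x ∈ X, x ⊔ a ∈ F}

/-- The coannihilator `(F : x) = {a | x ∨ a ∈ F}`. -/
def coann (F : Set α) (x : α) : Set α := {a : α | x ⊔ a ∈ F}

/-- `D_F(H) = {a | x ∨ a ∈ F for some x ∉ H}`, the set of `F`-divisors of `H`. -/
def divisorsF (F H : Set α) : Set α := {a : α | ∃ x ∉ H, x ⊔ a ∈ F}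

/-- A lattice ideal: nonempty, closed under join and downward closed. -/
def IsLatticeIdeal (I : Set α) : Prop :=
  I.Nonempty ∧ (∀ x ∈ I, ∀ y ∈ I, x ⊔ y ∈ I) ∧ ∀ x y : α, x ≤ y → y ∈ I → x ∈ I

/-- The lattice ideal generated by a set. -/
def idealGen (X : Set α) : Set α := ⋂₀ {I : Set α | IsLatticeIdeal I ∧ X ⊆ I}

/-- An `ω_F`-filter: a filter of the form `ω_F(I)` for some lattice ideal `I`. -/
def IsOmegaFilter (F H : Set α) : Prop :=
  IsFilter H ∧ ∃ I : Set α, IsLatticeIdeal I ∧ H = omegaF F I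

/-- `A` is `n`-normal with respect to `F`: every prime filter containing `F` contains at
most `n` distinct `F`-minimal prime filters. -/
def nNormalWrt (F : Set α) (n : ℕ) : Prop :=
  ∀ P : Set α, IsPrimeFilter P → F ⊆ P →
    ∀ m : Fin (n + 1) → Set α, (∀ i, IsMinPrimeOver F (m i) ∧ m i ⊆ P) →
      ¬ Function.Injective m

/-- A proper filter `G` is `k`-prime if it is the intersection of at most `k - 1` distinct
prime filters. -/
def kPrime (k : ℕ) (G : Set α) : Prop :=
  G ≠ Set.univ ∧ ∃ (m : ℕ) (P : Fin m → Set α), m ≤ k - 1 ∧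
    (∀ i, IsPrimeFilter (P i)) ∧ Function.Injective P ∧ G = ⋂ i, P i

/-!
Pairwise `xᵢ ∨ xⱼ ∈ F` means that every prime filter containing `F` misses at most one `xᵢ`.
Prime filters are plentiful: by Zorn, a filter avoiding a `∨`-closed set extends to a prime one
(maximality plus `(x ∨ y)ᵏ ≤ x ∨ yᵏ`). Consequently, for a prime `P ⊇ F`, `D_F(P)` is the
intersection of the `F`-minimal primes contained in `P`, and each `F`-minimal prime `m` satisfies
`m ⊆ D_F(m)`. The latter separates `n + 1` distinct minimal primes `mᵢ` by a pairwise family with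
`xᵢ ∉ mᵢ`, so that `(F : xᵢ) ⊆ mᵢ`; the former turns `n`-normality into `D_F(P)` having at most `n`
prime components, which `n + 1` pairwise elements cannot all escape, by pigeonhole. Conditions
(6) and (7) pass to pairwise families through `zⱼ = ∏_{i ≠ j} xᵢ` and `yᵢ = ⋁_{j ≠ i} xⱼ`.
-/

open Set

namespace ResiduatedLattice

instance toIsOrderedMonoid : IsOrderedMonoid α where
  mul_le_mul_left a b h c := (adjunction a c (b * c)).2 (h.trans ((adjunction b c _).1 le_rfl))

theorem le_one (a : α) : a ≤ 1 := one_eq_top (α := α) ▸ le_top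

theorem mul_le_left (a b : α) : a * b ≤ a := mul_le_of_le_one_right' (le_one b)

theorem mul_le_right (a b : α) : a * b ≤ b := mul_le_of_le_one_left' (le_one a)

theorem prod_le_of_mem {ι : Type*} {s : Finset ι} (f : ι → α) {j : ι} (hj : j ∈ s) :
    ∏ i ∈ s, f i ≤ f j := by
  classical
  rw [← Finset.mul_prod_erase s f hj]
  exact mul_le_left _ _

theorem mul_sup (a b c : α) : a * (b ⊔ c) = a * b ⊔ a * c := by
  refine le_antisymm ?_ (sup_le (mul_le_mul_right le_sup_left a) (mul_le_mul_right le_sup_right a))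
  rw [mul_comm, adjunction]
  exact sup_le ((adjunction b a _).1 (mul_comm a b ▸ le_sup_left))
    ((adjunction c a _).1 (mul_comm a c ▸ le_sup_right))

theorem sup_mul (a b c : α) : (a ⊔ b) * c = a * c ⊔ b * c := by
  rw [mul_comm, mul_sup, mul_comm c, mul_comm c]

theorem sup_mul_sup_le (a b c : α) : (a ⊔ b) * (a ⊔ c) ≤ a ⊔ b * c := by
  rw [mul_sup, sup_mul, sup_mul]
  exact sup_le (sup_le (le_sup_of_le_left (mul_le_left _ _)) (le_sup_of_le_left (mul_le_right _ _)))
    (sup_le (le_sup_of_le_left (mul_le_left _ _)) le_sup_right)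

theorem prod_sup_le {ι : Type*} (s : Finset ι) (a : α) (f : ι → α) :
    ∏ i ∈ s, (a ⊔ f i) ≤ a ⊔ ∏ i ∈ s, f i := by
  induction s using Finset.cons_induction with
  | empty => simp
  | cons t s hts ih =>
    rw [Finset.prod_cons, Finset.prod_cons]
    exact (mul_le_mul_right ih _).trans (sup_mul_sup_le a (f t) _)

theorem sup_pow_le (a b : α) (k : ℕ) : (a ⊔ b) ^ k ≤ a ⊔ b ^ k := by
  simpa using prod_sup_le (Finset.range k) a fun _ => b

end ResiduatedLattice

open ResiduatedLattice

namespace IsFilter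

variable {F : Set α}

theorem mem_of_le (hF : IsFilter F) {a b : α} (ha : a ∈ F) (h : a ≤ b) : b ∈ F :=
  hF.2.2 a ha b h

theorem mul_mem (hF : IsFilter F) {a b : α} (ha : a ∈ F) (hb : b ∈ F) : a * b ∈ F :=
  hF.2.1 a ha b hb

theorem one_mem (hF : IsFilter F) : (1 : α) ∈ F :=
  hF.1.elim fun x hx => hF.mem_of_le hx (le_one x)

theorem top_mem (hF : IsFilter F) : (⊤ : α) ∈ F := one_eq_top (α := α) ▸ hF.one_mem

theorem prod_mem (hF : IsFilter F) {ι : Type*} {s : Finset ι} {f : ι → α}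
    (h : ∀ i ∈ s, f i ∈ F) : ∏ i ∈ s, f i ∈ F :=
  Finset.prod_induction f (· ∈ F) (fun _ _ => hF.mul_mem) hF.one_mem h

theorem pow_mem (hF : IsFilter F) {a : α} (ha : a ∈ F) (k : ℕ) : a ^ k ∈ F := by
  simpa using hF.prod_mem (s := Finset.range k) fun _ _ => ha

theorem eq_univ_of_bot_mem (hF : IsFilter F) (h : (⊥ : α) ∈ F) : F = univ :=
  eq_univ_of_forall fun _ => hF.mem_of_le h bot_le

theorem sup_pow_mem (hF : IsFilter F) {a b : α} (h : a ⊔ b ∈ F) (k : ℕ) : a ⊔ b ^ k ∈ F :=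
  hF.mem_of_le (hF.pow_mem h k) (sup_pow_le a b k)

theorem pow_sup_pow_mem (hF : IsFilter F) {a b : α} (h : a ⊔ b ∈ F) (k j : ℕ) :
    a ^ k ⊔ b ^ j ∈ F := by
  have h' := hF.sup_pow_mem h j
  rw [sup_comm] at h' ⊢
  exact hF.sup_pow_mem h' k

end IsFilter

section Generation

variable {F X Y : Set α}

theorem isFilter_sInter {S : Set (Set α)} (hS : ∀ G ∈ S, IsFilter G) : IsFilter (⋂₀ S) :=
  ⟨⟨⊤, mem_sInter.2 fun G hG => (hS G hG).top_mem⟩,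
    fun _ ha _ hb => mem_sInter.2 fun G hG => (hS G hG).mul_mem (ha G hG) (hb G hG),
    fun _ ha _ hab => mem_sInter.2 fun G hG => (hS G hG).mem_of_le (ha G hG) hab⟩

theorem isFilter_filterGen (X : Set α) : IsFilter (filterGen X) :=
  isFilter_sInter fun _ hG => hG.1

theorem subset_filterGen (X : Set α) : X ⊆ filterGen X :=
  subset_sInter fun _ hG => hG.2

theorem filterGen_subset {G : Set α} (hG : IsFilter G) (h : X ⊆ G) : filterGen X ⊆ G :=
  sInter_subset_of_mem ⟨hG, h⟩

theorem filterGen_mono (h : X ⊆ Y) : filterGen X ⊆ filterGen Y :=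
  filterGen_subset (isFilter_filterGen Y) (h.trans (subset_filterGen Y))

variable {ι : Type*} [Fintype ι] [DecidableEq ι]

theorem mem_filterGen_iUnion {G : ι → Set α} (hG : ∀ i, IsFilter (G i)) {a : α} :
    a ∈ filterGen (⋃ i, G i) ↔ ∃ c : ι → α, (∀ i, c i ∈ G i) ∧ ∏ i, c i ≤ a := by
  refine ⟨fun ha => filterGen_subset (G := {a | ∃ c : ι → α, (∀ i, c i ∈ G i) ∧ ∏ i, c i ≤ a})
    ⟨⟨1, 1, fun i => (hG i).one_mem, by simp⟩, ?_, ?_⟩ ?_ ha, ?_⟩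
  · rintro _ ⟨c, hc, hca⟩ _ ⟨d, hd, hdb⟩
    refine ⟨c * d, fun i => (hG i).mul_mem (hc i) (hd i), ?_⟩
    simpa only [Pi.mul_apply, Finset.prod_mul_distrib] using mul_le_mul' hca hdb
  · rintro _ ⟨c, hc, hca⟩ _ hab
    exact ⟨c, hc, hca.trans hab⟩
  · rintro a ⟨_, ⟨i, rfl⟩, ha⟩
    refine ⟨Pi.mulSingle i a, fun j => ?_, by simp⟩
    rcases eq_or_ne j i with rfl | hji
    · simpa using ha
    · simpa [hji] using (hG j).one_mem
  · rintro ⟨c, hc, hca⟩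
    refine (isFilter_filterGen _).mem_of_le ((isFilter_filterGen _).prod_mem fun i _ => ?_) hca
    exact subset_filterGen _ (mem_iUnion_of_mem i (hc i))

theorem filterGen_iUnion_eq_univ_iff {G : ι → Set α} (hG : ∀ i, IsFilter (G i)) :
    filterGen (⋃ i, G i) = univ ↔ ∃ c : ι → α, (∀ i, c i ∈ G i) ∧ ∏ i, c i = ⊥ := by
  refine ⟨fun h => ?_, fun ⟨c, hc, hbot⟩ => ?_⟩
  · obtain ⟨c, hc, hle⟩ := (mem_filterGen_iUnion hG).1 (h ▸ mem_univ ⊥)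
    exact ⟨c, hc, le_bot_iff.1 hle⟩
  · exact (isFilter_filterGen _).eq_univ_of_bot_mem ((mem_filterGen_iUnion hG).2 ⟨c, hc, hbot.le⟩)

end Generation

section Coannihilator

variable {F : Set α}

theorem isFilter_coann (hF : IsFilter F) (x : α) : IsFilter (coann F x) := by
  refine ⟨⟨⊤, ?_⟩, fun a ha b hb => ?_, fun a ha b hab => hF.mem_of_le ha (sup_le_sup_left hab x)⟩
  · simpa [coann] using hF.top_mem
  · exact hF.mem_of_le (hF.mul_mem ha hb) (sup_mul_sup_le x a b)

theorem subset_coann (hF : IsFilter F) (x : α) : F ⊆ coann F x :=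
  fun _ ha => hF.mem_of_le ha le_sup_right

theorem coann_mono (hF : IsFilter F) {x y : α} (h : x ≤ y) : coann F x ⊆ coann F y :=
  fun a ha => hF.mem_of_le ha (sup_le_sup_right h a)

theorem coann_subset_of_notMem {Q : Set α} (hQ : IsPrimeFilter Q) (hFQ : F ⊆ Q) {x : α}
    (hx : x ∉ Q) : coann F x ⊆ Q :=
  fun a ha => (hQ.2.2 x a (hFQ ha)).resolve_left hx

end Coannihilator

section PrimeFilters

variable {F P : Set α}

theorem IsPrimeFilter.bot_notMem (hP : IsPrimeFilter P) : (⊥ : α) ∉ P :=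
  fun h => hP.2.1 (hP.1.eq_univ_of_bot_mem h)

theorem IsPrimeFilter.finset_sup_notMem (hP : IsPrimeFilter P) {ι : Type*} {s : Finset ι}
    {f : ι → α} (h : ∀ i ∈ s, f i ∉ P) : s.sup f ∉ P :=
  Finset.sup_induction hP.bot_notMem (fun a ha b hb hab => (hP.2.2 a b hab).elim ha hb) h

theorem IsPrimeFilter.filterGen_iUnion_ne_univ (hP : IsPrimeFilter P) {ι : Type*}
    {G : ι → Set α} (h : ∀ i, G i ⊆ P) : filterGen (⋃ i, G i) ≠ univ :=
  fun hG => hP.2.1 (eq_univ_of_univ_subset (hG ▸ filterGen_subset hP.1 (iUnion_subset h)))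

theorem isFilter_sUnion_of_isChain {c : Set (Set α)} (hc : ∀ G ∈ c, IsFilter G)
    (hchain : IsChain (· ⊆ ·) c) (hne : c.Nonempty) : IsFilter (⋃₀ c) := by
  refine ⟨hne.elim fun G hG => ⟨⊤, mem_sUnion_of_mem (hc G hG).top_mem hG⟩, ?_, ?_⟩
  · rintro a ⟨G, hG, ha⟩ b ⟨H, hH, hb⟩
    rcases hchain.total hG hH with hGH | hHG
    · exact mem_sUnion_of_mem ((hc H hH).mul_mem (hGH ha) hb) hH
    · exact mem_sUnion_of_mem ((hc G hG).mul_mem ha (hHG hb)) hG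
  · rintro a ⟨G, hG, ha⟩ b hab
    exact mem_sUnion_of_mem ((hc G hG).mem_of_le ha hab) hG

theorem IsFilter.isFilter_adjoin {M : Set α} (hM : IsFilter M) (x : α) :
    IsFilter {a | ∃ p ∈ M, ∃ k : ℕ, p * x ^ k ≤ a} := by
  refine ⟨⟨1, 1, hM.one_mem, 0, by simp⟩, ?_, ?_⟩
  · rintro _ ⟨p, hp, k, hk⟩ _ ⟨q, hq, j, hj⟩
    refine ⟨p * q, hM.mul_mem hp hq, k + j, ?_⟩
    rw [pow_add, mul_mul_mul_comm]
    exact mul_le_mul' hk hj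
  · rintro _ ⟨p, hp, k, hk⟩ _ hab
    exact ⟨p, hp, k, hk.trans hab⟩

theorem isPrimeFilter_of_maximal {C M : Set α} (hC : IsJoinClosed C)
    (hM : Maximal (fun G => IsFilter G ∧ ∀ c ∈ C, c ∉ G) M) : IsPrimeFilter M := by
  obtain ⟨⟨hMF, hMC⟩, hmax⟩ := hM
  have escape : ∀ x ∉ M, ∃ c ∈ C, ∃ p ∈ M, ∃ k : ℕ, p * x ^ k ≤ c := by
    intro x hx
    by_contra! h
    have hsub : M ⊆ {a | ∃ p ∈ M, ∃ k : ℕ, p * x ^ k ≤ a} := fun a ha => ⟨a, ha, 0, by simp⟩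
    exact hx (hmax ⟨hMF.isFilter_adjoin x, fun c hc ⟨p, hp, k, hk⟩ => h c hc p hp k hk⟩ hsub
      ⟨1, hMF.one_mem, 1, by simp⟩)
  refine ⟨hMF, ?_, fun x y hxy => ?_⟩
  · obtain ⟨c, hc⟩ := hC.1
    exact (ne_univ_iff_exists_notMem M).2 ⟨c, hMC c hc⟩
  by_contra! h
  obtain ⟨c, hc, p, hp, k, hk⟩ := escape x h.1
  obtain ⟨d, hd, q, hq, j, hj⟩ := escape y h.2
  have hmem := hMF.mul_mem (hMF.mul_mem hp hq) (hMF.pow_sup_pow_mem hxy k j)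
  refine hMC _ (hC.2 c hc d hd) (hMF.mem_of_le hmem ?_)
  calc p * q * (x ^ k ⊔ y ^ j) = p * q * x ^ k ⊔ p * q * y ^ j := mul_sup _ _ _
    _ ≤ p * x ^ k ⊔ q * y ^ j := by
      rw [mul_right_comm p q, mul_assoc p q]
      exact sup_le_sup (mul_le_left _ _) (mul_le_right _ _)
    _ ≤ c ⊔ d := sup_le_sup hk hj

theorem IsFilter.exists_isPrimeFilter_of_disjoint {C : Set α} (hF : IsFilter F)
    (hC : IsJoinClosed C) (hFC : ∀ c ∈ C, c ∉ F) :
    ∃ P, IsPrimeFilter P ∧ F ⊆ P ∧ ∀ c ∈ C, c ∉ P := by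
  obtain ⟨M, hFM, hM⟩ := zorn_subset_nonempty {G | IsFilter G ∧ ∀ c ∈ C, c ∉ G}
    (fun c hcS hchain hne => ⟨⋃₀ c,
      ⟨isFilter_sUnion_of_isChain (fun G hG => (hcS hG).1) hchain hne,
        fun x hx ⟨G, hG, hxG⟩ => (hcS hG).2 x hx hxG⟩,
      fun _ => subset_sUnion_of_mem⟩) F ⟨hF, hFC⟩
  exact ⟨M, isPrimeFilter_of_maximal hC hM, hFM, hM.prop.2⟩

theorem IsFilter.exists_isPrimeFilter_notMem (hF : IsFilter F) {a : α} (ha : a ∉ F) :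
    ∃ P, IsPrimeFilter P ∧ F ⊆ P ∧ a ∉ P := by
  obtain ⟨P, hP, hFP, hCP⟩ :=
    hF.exists_isPrimeFilter_of_disjoint (C := {a}) ⟨⟨a, rfl⟩, by simp⟩ (by simpa using ha)
  exact ⟨P, hP, hFP, hCP a rfl⟩

theorem IsFilter.exists_isPrimeFilter_of_ne_univ (hF : IsFilter F) (hne : F ≠ univ) :
    ∃ P, IsPrimeFilter P ∧ F ⊆ P :=
  let ⟨P, hP, hFP, _⟩ := hF.exists_isPrimeFilter_notMem fun h => hne (hF.eq_univ_of_bot_mem h)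
  ⟨P, hP, hFP⟩

theorem isPrimeFilter_sInter_of_isChain {c : Set (Set α)} (hc : ∀ P ∈ c, IsPrimeFilter P)
    (hchain : IsChain (· ⊆ ·) c) (hne : c.Nonempty) : IsPrimeFilter (⋂₀ c) := by
  obtain ⟨P₀, hP₀⟩ := hne
  refine ⟨isFilter_sInter fun P hP => (hc P hP).1,
    fun h => (hc P₀ hP₀).2.1 (eq_univ_of_univ_subset (h ▸ sInter_subset_of_mem hP₀)),
    fun x y hxy => ?_⟩
  by_contra! h
  simp only [mem_sInter, not_forall] at h
  obtain ⟨⟨P, hP, hx⟩, ⟨Q, hQ, hy⟩⟩ := h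
  rcases hchain.total hP hQ with hPQ | hQP
  · exact ((hc P hP).2.2 x y (hxy P hP)).elim hx fun hyP => hy (hPQ hyP)
  · exact ((hc Q hQ).2.2 x y (hxy Q hQ)).elim (fun hxQ => hx (hQP hxQ)) hy

theorem IsPrimeFilter.exists_isMinPrimeOver_subset (hP : IsPrimeFilter P) (hFP : F ⊆ P) :
    ∃ Q, IsMinPrimeOver F Q ∧ Q ⊆ P := by
  obtain ⟨Q, hQP, hQ⟩ := zorn_superset_nonempty {Q | IsPrimeFilter Q ∧ F ⊆ Q}
    (fun c hcS hchain hne => ⟨⋂₀ c,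
      ⟨isPrimeFilter_sInter_of_isChain (fun Q hQ => (hcS hQ).1) hchain hne,
        subset_sInter fun Q hQ => (hcS hQ).2⟩,
      fun _ => sInter_subset_of_mem⟩) P ⟨hP, hFP⟩
  exact ⟨Q, ⟨hQ.prop.1, hQ.prop.2, fun R hR hFR hRQ => subset_antisymm hRQ (hQ.2 ⟨hR, hFR⟩ hRQ)⟩,
    hQP⟩

end PrimeFilters

section Divisors

variable {F P : Set α}

theorem subset_divisorsF (hF : IsFilter F) (hP : P ≠ univ) : F ⊆ divisorsF F P := by
  obtain ⟨x, hx⟩ := (ne_univ_iff_exists_notMem P).1 hP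
  exact fun a ha => ⟨x, hx, hF.mem_of_le ha le_sup_right⟩

theorem divisorsF_subset_of_isPrimeFilter {Q : Set α} (hQ : IsPrimeFilter Q) (hFQ : F ⊆ Q)
    (hQP : Q ⊆ P) : divisorsF F P ⊆ Q := by
  rintro a ⟨x, hx, hxa⟩
  exact coann_subset_of_notMem hQ hFQ (fun h => hx (hQP h)) hxa

theorem IsPrimeFilter.exists_isPrimeFilter_notMem_of_notMem_divisorsF (hF : IsFilter F)
    (hP : IsPrimeFilter P) {a : α} (ha : a ∉ divisorsF F P) :
    ∃ Q, IsPrimeFilter Q ∧ F ⊆ Q ∧ Q ⊆ P ∧ a ∉ Q := by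
  obtain ⟨x₀, hx₀⟩ := (ne_univ_iff_exists_notMem P).1 hP.2.1
  have hC : IsJoinClosed {c | ∃ x ∉ P, c ≤ a ⊔ x} :=
    ⟨⟨a, x₀, hx₀, le_sup_left⟩, fun c ⟨x, hx, hc⟩ d ⟨y, hy, hd⟩ =>
      ⟨x ⊔ y, fun h => (hP.2.2 x y h).elim hx hy,
        sup_le (hc.trans (sup_le_sup_left le_sup_left a))
          (hd.trans (sup_le_sup_left le_sup_right a))⟩⟩
  obtain ⟨Q, hQ, hFQ, hCQ⟩ := hF.exists_isPrimeFilter_of_disjoint hC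
    fun c ⟨x, hx, hc⟩ hcF => ha ⟨x, hx, sup_comm a x ▸ hF.mem_of_le hcF hc⟩
  exact ⟨Q, hQ, hFQ, fun q hq => by_contra fun hqP => hCQ q ⟨q, hqP, le_sup_right⟩ hq,
    hCQ a ⟨x₀, hx₀, le_sup_left⟩⟩

theorem IsMinPrimeOver.subset_divisorsF (hF : IsFilter F) {m : Set α}
    (hm : IsMinPrimeOver F m) : m ⊆ divisorsF F m := by
  intro a ha
  by_contra haD
  obtain ⟨Q, hQ, hFQ, hQm, haQ⟩ :=
    hm.1.exists_isPrimeFilter_notMem_of_notMem_divisorsF hF haD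
  exact haQ (hm.2.2 Q hQ hFQ hQm ▸ ha)

theorem divisorsF_eq_sInter (hF : IsFilter F) (hP : IsPrimeFilter P) :
    divisorsF F P = ⋂₀ {Q | IsMinPrimeOver F Q ∧ Q ⊆ P} := by
  refine subset_antisymm (fun a ha => mem_sInter.2 fun Q hQ =>
    divisorsF_subset_of_isPrimeFilter hQ.1.1 hQ.1.2.1 hQ.2 ha) fun a ha => by_contra fun haD => ?_
  obtain ⟨Q₀, hQ₀, hFQ₀, hQ₀P, haQ₀⟩ :=
    hP.exists_isPrimeFilter_notMem_of_notMem_divisorsF hF haD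
  obtain ⟨Q, hQ, hQQ₀⟩ := hQ₀.exists_isMinPrimeOver_subset hFQ₀
  exact haQ₀ (hQQ₀ (ha Q ⟨hQ, hQQ₀.trans hQ₀P⟩))

end Divisors

theorem Set.encard_le_of_forall_not_injective {β : Type*} {S : Set β} {n : ℕ}
    (h : ∀ f : Fin (n + 1) → β, (∀ i, f i ∈ S) → ¬ Function.Injective f) : S.encard ≤ n := by
  by_contra! hlt
  obtain ⟨e, -⟩ := Fin.Embedding.exists_embedding_disjoint_range_of_add_le_ENat_card
    (α := S) (s := ∅) (n := n + 1) (by simpa using Order.add_one_le_of_lt hlt)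
  exact h (fun i => e i) (fun i => (e i).2) (Subtype.val_injective.comp e.injective)

theorem kPrime_sInter {n : ℕ} {S : Set (Set α)} (hS : ∀ Q ∈ S, IsPrimeFilter Q)
    (hcard : S.encard ≤ n) (hne : ⋂₀ S ≠ univ) : kPrime (n + 1) (⋂₀ S) := by
  obtain ⟨hfin, hncard⟩ := encard_le_coe_iff_finite_ncard_le.1 hcard
  have := hfin.to_subtype
  let e := Finite.equivFin S
  refine ⟨hne, Nat.card S, fun i => e.symm i, by simpa [Nat.card_coe_set_eq] using hncard,
    fun i => hS _ (e.symm i).2, Subtype.val_injective.comp e.symm.injective, ?_⟩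
  rw [sInter_eq_iInter, ← e.symm.surjective.iInter_comp]

theorem exists_mem_iInter_of_pairwise_sup_mem {κ ι : Type*} [Fintype κ] [Fintype ι]
    {Q : κ → Set α} (hQ : ∀ k, IsPrimeFilter (Q k)) (hcard : Fintype.card κ < Fintype.card ι)
    {x : ι → α} (hx : ∀ i j, i ≠ j → x i ⊔ x j ∈ ⋂ k, Q k) : ∃ i, x i ∈ ⋂ k, Q k := by
  by_contra! h
  choose k hk using fun i => by simpa using h i
  obtain ⟨i, j, hij, hkij⟩ := Fintype.exists_ne_map_eq_of_card_lt k hcard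
  exact ((hQ (k i)).2.2 _ _ (mem_iInter.1 (hx i j hij) (k i))).elim (hk i) (hkij ▸ hk j)

theorem Finset.sup_le_sup_erase_sup_erase {β γ : Type*} [DecidableEq β] [SemilatticeSup γ]
    [OrderBot γ] (s : Finset β) (f : β → γ) {i j : β} (hij : i ≠ j) :
    s.sup f ≤ (s.erase i).sup f ⊔ (s.erase j).sup f := by
  refine Finset.sup_le fun k hk => ?_
  rcases eq_or_ne k i with rfl | hki
  · exact le_sup_of_le_right (Finset.le_sup (Finset.mem_erase.2 ⟨hij, hk⟩))
  · exact le_sup_of_le_left (Finset.le_sup (Finset.mem_erase.2 ⟨hki, hk⟩))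

section Normality

variable {F : Set α} {n : ℕ} {ι : Type*} [Fintype ι] [DecidableEq ι]

theorem exists_pairwise_sup_mem_of_isMinPrimeOver (hF : IsFilter F) {m : ι → Set α}
    (hm : ∀ i, IsMinPrimeOver F (m i)) (hinj : Function.Injective m) :
    ∃ X : ι → α, (∀ i, X i ∉ m i) ∧ ∀ i j, i ≠ j → X i ⊔ X j ∈ F := by
  have hsep : ∀ i j, ∃ p : α × α, i ≠ j → p.1 ∉ m i ∧ p.2 ∉ m j ∧ p.1 ⊔ p.2 ∈ F := by
    intro i j
    by_cases hij : i = j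
    · exact ⟨(⊥, ⊥), fun h => (h hij).elim⟩
    have hji : ¬ m j ⊆ m i := fun h => hij (hinj ((hm i).2.2 _ (hm j).1 (hm j).2.1 h).symm)
    obtain ⟨c, hcj, hci⟩ := not_subset.1 hji
    obtain ⟨d, hdj, hdc⟩ := (hm j).subset_divisorsF hF hcj
    exact ⟨(c, d), fun _ => ⟨hci, hdj, sup_comm d c ▸ hdc⟩⟩
  choose p hp using hsep
  refine ⟨fun i => (Finset.univ.erase i).sup fun j => (p i j).1 ⊔ (p j i).2, fun i => ?_,
    fun i j hij => hF.mem_of_le (hp i j hij).2.2 (sup_le_sup ?_ ?_)⟩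
  · refine (hm i).1.finset_sup_notMem fun j hj h => ?_
    have hji := (Finset.mem_erase.1 hj).1
    exact ((hm i).1.2.2 _ _ h).elim (hp i j hji.symm).1 (hp j i hji).2.1
  · exact le_sup_left.trans (Finset.le_sup (f := fun k => (p i k).1 ⊔ (p k i).2)
      (Finset.mem_erase.2 ⟨hij.symm, Finset.mem_univ j⟩))
  · exact le_sup_right.trans (Finset.le_sup (f := fun k => (p j k).1 ⊔ (p k j).2)
      (Finset.mem_erase.2 ⟨hij, Finset.mem_univ i⟩))

-- If `x i ⊔ x j ∈ F` for `i ≠ j`, then in any prime `P ⊇ F` at most one `x i` is missing, so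
-- the product of the others lies in `P`.
theorem sup_prod_erase_mem [Nonempty ι] (hF : IsFilter F) {x : ι → α}
    (hx : ∀ i j, i ≠ j → x i ⊔ x j ∈ F) :
    (Finset.univ.sup fun j => ∏ i ∈ Finset.univ.erase j, x i) ∈ F := by
  by_contra h
  obtain ⟨P, hP, hFP, hzP⟩ := hF.exists_isPrimeFilter_notMem h
  suffices ∃ j, ∀ i ∈ Finset.univ.erase j, x i ∈ P by
    obtain ⟨j, hj⟩ := this
    exact hzP (hP.1.mem_of_le (hP.1.prod_mem hj)
      (Finset.le_sup (f := fun j => ∏ i ∈ Finset.univ.erase j, x i) (Finset.mem_univ j)))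
  by_cases hout : ∃ j, x j ∉ P
  · obtain ⟨j, hj⟩ := hout
    exact ⟨j, fun i hi => (hP.2.2 _ _ (hFP (hx i j (Finset.mem_erase.1 hi).1))).resolve_right hj⟩
  · exact ⟨Classical.arbitrary ι, fun i _ => not_exists_not.1 hout i⟩

theorem filterGen_iUnion_coann_eq_univ_of_sup_erase [Nonempty ι] (hF : IsFilter F)
    (h : ∀ x : ι → α, Finset.univ.sup x ∈ F →
      filterGen (⋃ i, coann F ((Finset.univ.erase i).sup x)) = univ)
    {x : ι → α} (hx : ∀ i j, i ≠ j → x i ⊔ x j ∈ F) :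
    filterGen (⋃ i, coann F (x i)) = univ := by
  refine eq_univ_of_univ_subset ((h _ (sup_prod_erase_mem hF hx)).symm.subset.trans
    (filterGen_mono (iUnion_mono fun i => coann_mono hF (Finset.sup_le fun j hj => ?_))))
  exact prod_le_of_mem x
    (Finset.mem_erase.2 ⟨(Finset.mem_erase.1 hj).1.symm, Finset.mem_univ i⟩)

theorem coann_sup_eq_filterGen_of_sup_erase [Nonempty ι] (hF : IsFilter F)
    (h : ∀ x : ι → α, Finset.univ.sup x ∈ F →
      filterGen (⋃ i, coann F ((Finset.univ.erase i).sup x)) = univ) (x : ι → α) :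
    coann F (Finset.univ.sup x) = filterGen (⋃ i, coann F ((Finset.univ.erase i).sup x)) := by
  refine subset_antisymm (fun a ha => ?_) (filterGen_subset (isFilter_coann hF _)
    (iUnion_subset fun i => coann_mono hF (Finset.sup_mono (Finset.erase_subset i _))))
  have hsup : Finset.univ.sup (x ⊔ fun _ => a) ∈ F := by
    rwa [Finset.sup_sup, Finset.sup_const Finset.univ_nonempty]
  obtain ⟨b, hb, hbot⟩ := (filterGen_iUnion_eq_univ_iff fun i => isFilter_coann hF _).1 (h _ hsup)
  refine (mem_filterGen_iUnion fun i => isFilter_coann hF _).2 ⟨fun i => a ⊔ b i, fun i => ?_, ?_⟩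
  · refine hF.mem_of_le (hb i) ?_
    rw [← sup_assoc]
    exact sup_le_sup_right (Finset.sup_le fun j hj => sup_le_sup_right (Finset.le_sup hj) a) _
  · calc ∏ i, (a ⊔ b i) ≤ a ⊔ ∏ i, b i := prod_sup_le _ a b
      _ = a := by rw [hbot, sup_bot_eq]

theorem filterGen_iUnion_isMinPrimeOver_eq_univ (h : nNormalWrt F n) {m : Fin (n + 1) → Set α}
    (hm : ∀ i, IsMinPrimeOver F (m i)) (hinj : Function.Injective m) :
    filterGen (⋃ i, m i) = univ := by
  by_contra hne
  obtain ⟨P, hP, hGP⟩ := (isFilter_filterGen _).exists_isPrimeFilter_of_ne_univ hne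
  have hmP i : m i ⊆ P := (subset_iUnion m i).trans ((subset_filterGen _).trans hGP)
  exact h P hP ((hm 0).2.1.trans (hmP 0)) m (fun i => ⟨hm i, hmP i⟩) hinj

theorem kPrime_divisorsF (hF : IsFilter F) (h : nNormalWrt F n) {P : Set α}
    (hP : IsPrimeFilter P) (hFP : F ⊆ P) : kPrime (n + 1) (divisorsF F P) := by
  have hne : divisorsF F P ≠ univ := fun hD =>
    hP.2.1 (eq_univ_of_univ_subset (hD ▸ divisorsF_subset_of_isPrimeFilter hP hFP subset_rfl))
  rw [divisorsF_eq_sInter hF hP] at hne ⊢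
  exact kPrime_sInter (fun Q hQ => hQ.1.1)
    (encard_le_of_forall_not_injective fun m hm => h P hP hFP m hm) hne

theorem filterGen_iUnion_coann_eq_univ_of_kPrime (hF : IsFilter F)
    (h : ∀ P, IsPrimeFilter P → F ⊆ P → kPrime (n + 1) (divisorsF F P))
    {x : Fin (n + 1) → α} (hx : ∀ i j, i ≠ j → x i ⊔ x j ∈ F) :
    filterGen (⋃ i, coann F (x i)) = univ := by
  by_contra hne
  obtain ⟨P, hP, hGP⟩ := (isFilter_filterGen _).exists_isPrimeFilter_of_ne_univ hne
  have hcP i : coann F (x i) ⊆ P := (subset_iUnion _ i).trans ((subset_filterGen _).trans hGP)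
  obtain ⟨-, m, Q, hm, hQ, -, hD⟩ := h P hP ((subset_coann hF (x 0)).trans (hcP 0))
  obtain ⟨i, hi⟩ := exists_mem_iInter_of_pairwise_sup_mem hQ (by simpa using Nat.lt_succ_of_le hm)
    fun i j hij => hD ▸ subset_divisorsF hF hP.2.1 (hx i j hij)
  obtain ⟨z, hz, hzx⟩ := hD ▸ hi
  exact hz (hcP i (show x i ⊔ z ∈ F from sup_comm z (x i) ▸ hzx))

theorem nNormalWrt_of_filterGen_iUnion_coann_eq_univ (hF : IsFilter F)
    (h : ∀ x : Fin (n + 1) → α, (∀ i j, i ≠ j → x i ⊔ x j ∈ F) →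
      filterGen (⋃ i, coann F (x i)) = univ) : nNormalWrt F n := by
  intro P hP _ m hm hinj
  obtain ⟨X, hXm, hX⟩ := exists_pairwise_sup_mem_of_isMinPrimeOver hF (fun i => (hm i).1) hinj
  exact hP.filterGen_iUnion_ne_univ (fun i =>
    (coann_subset_of_notMem (hm i).1.1 (hm i).1.2.1 (hXm i)).trans (hm i).2) (h X hX)

end Normality

theorem stmt_17_general (F : Set α) (hF : IsFilter F) (n : ℕ) :
    List.TFAE [
      (∀ m : Fin (n + 1) → Set α, (∀ i, IsMinPrimeOver F (m i)) → Function.Injective m →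
        filterGen (⋃ i, m i) = Set.univ),
      nNormalWrt F n,
      (∀ P : Set α, IsPrimeFilter P → F ⊆ P → kPrime (n + 1) (divisorsF F P)),
      (∀ x : Fin (n + 1) → α, (∀ i j, i ≠ j → x i ⊔ x j ∈ F) →
        filterGen (⋃ i, coann F (x i)) = Set.univ),
      (∀ x : Fin (n + 1) → α, (∀ i j, i ≠ j → x i ⊔ x j ∈ F) →
        ∃ a : Fin (n + 1) → α, (∀ i, a i ∈ coann F (x i)) ∧ (∏ i, a i) = ⊥),
      (∀ x : Fin (n + 1) → α,
        coann F (Finset.univ.sup x) =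
          filterGen (⋃ i, coann F ((Finset.univ.erase i).sup x))),
      (∀ x : Fin (n + 1) → α, Finset.univ.sup x ∈ F →
        filterGen (⋃ i, coann F ((Finset.univ.erase i).sup x)) = Set.univ) ] := by
  tfae_have 1 → 2 := fun h P hP _ m hm hinj =>
    hP.filterGen_iUnion_ne_univ (fun i => (hm i).2) (h m (fun i => (hm i).1) hinj)
  tfae_have 2 → 1 := fun h _ => filterGen_iUnion_isMinPrimeOver_eq_univ h
  tfae_have 2 → 3 := fun h _ => kPrime_divisorsF hF h
  tfae_have 3 → 4 := fun h _ => filterGen_iUnion_coann_eq_univ_of_kPrime hF h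
  tfae_have 4 ↔ 5 := forall_congr' fun x => imp_congr_right fun _ =>
    filterGen_iUnion_eq_univ_iff fun i => isFilter_coann hF (x i)
  tfae_have 4 → 2 := nNormalWrt_of_filterGen_iUnion_coann_eq_univ hF
  tfae_have 4 → 7 := fun h x hx => h _ fun i j hij =>
    hF.mem_of_le hx (Finset.univ.sup_le_sup_erase_sup_erase x hij)
  tfae_have 7 → 4 := fun h _ => filterGen_iUnion_coann_eq_univ_of_sup_erase hF h
  tfae_have 7 → 6 := coann_sup_eq_filterGen_of_sup_erase hF
  tfae_have 6 → 7 := fun h x hx =>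
    h x ▸ eq_univ_of_forall fun _ => hF.mem_of_le hx le_sup_left
  tfae_finish

/-- Proposition 4.5: the seven characterizations of `n`-normality with
respect to a filter `F` are equivalent. -/
theorem stmt_17 (F : Set α) (hF : IsFilter F) (n : ℕ) (hn : 1 ≤ n) :
    List.TFAE [
      (∀ m : Fin (n + 1) → Set α, (∀ i, IsMinPrimeOver F (m i)) → Function.Injective m →
        filterGen (⋃ i, m i) = Set.univ),
      nNormalWrt F n,
      (∀ P : Set α, IsPrimeFilter P → F ⊆ P → kPrime (n + 1) (divisorsF F P)),
      (∀ x : Fin (n + 1) → α, (∀ i j, i ≠ j → x i ⊔ x j ∈ F) →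
        filterGen (⋃ i, coann F (x i)) = Set.univ),
      (∀ x : Fin (n + 1) → α, (∀ i j, i ≠ j → x i ⊔ x j ∈ F) →
        ∃ a : Fin (n + 1) → α, (∀ i, a i ∈ coann F (x i)) ∧ (∏ i, a i) = ⊥),
      (∀ x : Fin (n + 1) → α,
        coann F (Finset.univ.sup x) =
          filterGen (⋃ i, coann F ((Finset.univ.erase i).sup x))),
      (∀ x : Fin (n + 1) → α, Finset.univ.sup x ∈ F →
        filterGen (⋃ i, coann F ((Finset.univ.erase i).sup x)) = Set.univ) ] :=
  stmt_17_general F hF n
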